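/- arXiv:gr-qc/0105023 — 2 statements merged into one kernel-verified Lean document; each statement's English description precedes it below -/
import Mathlib

section
/- Let γ, u : I → ℝ be differentiable functions on an open interval I with γ(t) > 0 for all t. Define Φ₋₁ = (1/2)(γ - γ⁻¹(u² + 1)), Φ₀ = γ⁻¹ u, Φ₁ = (1/2)(γ - γ⁻¹(u² - 1)). Then at every point of I, (Φ₋₁')² - (Φ₀')² - (Φ₁')² = γ⁻²(γ')² - γ⁻²(u')². -/
theorem stmt_2 (I : Set ℝ) (hI : IsOpen I) (γ u γ' u' : ℝ → ℝ)
    (hγ : ∀ t ∈ I, HasDerivAt γ (γ' t) t)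
    (hu : ∀ t ∈ I, HasDerivAt u (u' t) t)
    (hpos : ∀ t ∈ I, 0 < γ t) :
    ∀ t ∈ I,
      (deriv (fun s => (1/2) * (γ s - (γ s)⁻¹ * ((u s)^2 + 1))) t)^2
        - (deriv (fun s => (γ s)⁻¹ * u s) t)^2
        - (deriv (fun s => (1/2) * (γ s - (γ s)⁻¹ * ((u s)^2 - 1))) t)^2
      = (γ t)⁻¹^2 * (γ' t)^2 - (γ t)⁻¹^2 * (u' t)^2 := by
  intro t ht
  have hγt := hγ t ht
  have hut := hu t ht
  have hne : γ t ≠ 0 := (hpos t ht).ne'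
  have hinv : HasDerivAt (fun s => (γ s)⁻¹) (-(γ' t) / (γ t)^2) t := hγt.inv hne
  have h0 : HasDerivAt (fun s => (γ s)⁻¹ * u s)
      (-(γ' t) / (γ t)^2 * u t + (γ t)⁻¹ * u' t) t := hinv.mul hut
  have hu2p : HasDerivAt (fun s => (u s)^2 + 1) (2 * u t * u' t) t := by
    have := (hut.pow 2).add_const 1
    simpa [mul_comm, mul_assoc] using this
  have hu2m : HasDerivAt (fun s => (u s)^2 - 1) (2 * u t * u' t) t := by
    have := (hut.pow 2).sub_const 1
    simpa [mul_comm, mul_assoc] using this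
  have h1 : HasDerivAt (fun s => (1/2) * (γ s - (γ s)⁻¹ * ((u s)^2 + 1)))
      ((1/2) * (γ' t - (-(γ' t) / (γ t)^2 * ((u t)^2 + 1) + (γ t)⁻¹ * (2 * u t * u' t)))) t :=
    (hγt.sub (hinv.mul hu2p)).const_mul (1/2)
  have h2 : HasDerivAt (fun s => (1/2) * (γ s - (γ s)⁻¹ * ((u s)^2 - 1)))
      ((1/2) * (γ' t - (-(γ' t) / (γ t)^2 * ((u t)^2 - 1) + (γ t)⁻¹ * (2 * u t * u' t)))) t :=
    (hγt.sub (hinv.mul hu2m)).const_mul (1/2)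
  rw [h1.deriv, h2.deriv, h0.deriv]
  field_simp
  ring
end

section
/- Let U ⊆ ℝⁿ be open and let Φ₋₁, Φ₀, Φ₁ : U → ℝ be smooth functions satisfying (a) the constraint Φ₋₁² - Φ₀² - Φ₁² = -1, (b) Φ₁ - Φ₋₁ > 0 on U, and (c) the field equations ΔΦ_A = R Φ_A for A ∈ {-1, 0, 1}, where R := |∇Φ₋₁|² - |∇Φ₀|² - |∇Φ₁|² and Δ, ∇ are the Euclidean Laplacian and gradient. Define Ξ± = (1 ± Φ₀)/(Φ₁ - Φ₋₁) - 1. Then on U: div( (Φ₁ - Φ₋₁)² ∇Ξ± ) = -Δ(Φ₁ - Φ₋₁) = -R (Φ₁ - Φ₋₁) = -(Φ₁ - Φ₋₁)³ ⟨∇Ξ₊, ∇Ξ₋⟩. -/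
open Finset

/-- Euclidean Laplacian of `f : (Fin n → ℝ) → ℝ` at `x`: sum of second partial derivatives. -/
noncomputable def lap {n : ℕ} (f : (Fin n → ℝ) → ℝ) (x : Fin n → ℝ) : ℝ :=
  ∑ i : Fin n, fderiv ℝ (fun y => fderiv ℝ f y (Pi.single i 1)) x (Pi.single i 1)

/-- Euclidean divergence of a vector field `V : (Fin n → ℝ) → (Fin n → ℝ)` at `x`. -/
noncomputable def diver {n : ℕ} (V : (Fin n → ℝ) → (Fin n → ℝ)) (x : Fin n → ℝ) : ℝ :=
  ∑ i : Fin n, fderiv ℝ (fun y => V y i) x (Pi.single i 1)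

/-- `i`-th partial derivative of `f` at `x`. -/
noncomputable def pd {n : ℕ} (f : (Fin n → ℝ) → ℝ) (x : Fin n → ℝ) (i : Fin n) : ℝ :=
  fderiv ℝ f x (Pi.single i 1)

section Aux
variable {n : ℕ}

lemma pd_sub {f g : (Fin n → ℝ) → ℝ} {x : Fin n → ℝ} (hf : DifferentiableAt ℝ f x)
    (hg : DifferentiableAt ℝ g x) (i : Fin n) :
    pd (fun y => f y - g y) x i = pd f x i - pd g x i := by
  simp [pd, fderiv_fun_sub hf hg]

lemma pd_mul {f g : (Fin n → ℝ) → ℝ} {x : Fin n → ℝ} (hf : DifferentiableAt ℝ f x)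
    (hg : DifferentiableAt ℝ g x) (i : Fin n) :
    pd (fun y => f y * g y) x i = f x * pd g x i + g x * pd f x i := by
  simp [pd, fderiv_fun_mul hf hg]

lemma pd_const_add {f : (Fin n → ℝ) → ℝ} {x : Fin n → ℝ} (c : ℝ) (i : Fin n) :
    pd (fun y => c + f y) x i = pd f x i := by
  simp [pd, fderiv_const_add]

lemma pd_add_const {f : (Fin n → ℝ) → ℝ} {x : Fin n → ℝ} (c : ℝ) (i : Fin n) :
    pd (fun y => f y + c) x i = pd f x i := by
  simp [pd, fderiv_add_const]

lemma pd_const_mul {f : (Fin n → ℝ) → ℝ} {x : Fin n → ℝ} (hf : DifferentiableAt ℝ f x)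
    (c : ℝ) (i : Fin n) :
    pd (fun y => c * f y) x i = c * pd f x i := by
  simp [pd, fderiv_const_mul hf]

lemma pd_sq {f : (Fin n → ℝ) → ℝ} {x : Fin n → ℝ} (hf : DifferentiableAt ℝ f x) (i : Fin n) :
    pd (fun y => f y ^ 2) x i = 2 * f x * pd f x i := by
  have h : (fun y => f y ^ 2) = fun y => f y * f y := by ext y; ring
  rw [h, pd_mul hf hf]; ring

lemma contDiffAt_pd {f : (Fin n → ℝ) → ℝ} {x : Fin n → ℝ} (hf : ContDiffAt ℝ (⊤ : ℕ∞) f x)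
    (i : Fin n) : ContDiffAt ℝ (⊤ : ℕ∞) (fun y => pd f y i) x :=
  (hf.fderiv_right (by simp)).clm_apply contDiffAt_const

lemma pd_congr {f g : (Fin n → ℝ) → ℝ} {x : Fin n → ℝ} (h : f =ᶠ[nhds x] g) (i : Fin n) :
    pd f x i = pd g x i := by
  rw [pd, pd, h.fderiv_eq]

lemma lap_eq_sum_pd {f : (Fin n → ℝ) → ℝ} {x : Fin n → ℝ} :
    lap f x = ∑ i : Fin n, pd (fun y => pd f y i) x i := rfl

lemma diver_eq_sum_pd {V : (Fin n → ℝ) → (Fin n → ℝ)} {x : Fin n → ℝ} :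
    diver V x = ∑ i : Fin n, pd (fun y => V y i) x i := rfl

end Aux

theorem stmt_14 {n : ℕ} (U : Set (Fin n → ℝ)) (hU : IsOpen U)
    (Phim1 Phi0 Phi1 : (Fin n → ℝ) → ℝ)
    (hm1 : ContDiffOn ℝ (⊤ : ℕ∞) Phim1 U) (h0 : ContDiffOn ℝ (⊤ : ℕ∞) Phi0 U)
    (h1 : ContDiffOn ℝ (⊤ : ℕ∞) Phi1 U)
    (hcon : ∀ x ∈ U, (Phim1 x)^2 - (Phi0 x)^2 - (Phi1 x)^2 = -1)
    (hpos : ∀ x ∈ U, Phi1 x - Phim1 x > 0)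
    (R : (Fin n → ℝ) → ℝ)
    (hR : ∀ x ∈ U, R x = ∑ i : Fin n,
      ((pd Phim1 x i)^2 - (pd Phi0 x i)^2 - (pd Phi1 x i)^2))
    (hfm1 : ∀ x ∈ U, lap Phim1 x = R x * Phim1 x)
    (hf0 : ∀ x ∈ U, lap Phi0 x = R x * Phi0 x)
    (hf1 : ∀ x ∈ U, lap Phi1 x = R x * Phi1 x)
    (Ξp Ξm : (Fin n → ℝ) → ℝ)
    (hXp : ∀ x, Ξp x = (1 + Phi0 x) / (Phi1 x - Phim1 x) - 1)
    (hXm : ∀ x, Ξm x = (1 - Phi0 x) / (Phi1 x - Phim1 x) - 1) :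
    ∀ x ∈ U,
      diver (fun y i => (Phi1 y - Phim1 y)^2 * pd Ξp y i) x
          = -lap (fun y => Phi1 y - Phim1 y) x
      ∧ diver (fun y i => (Phi1 y - Phim1 y)^2 * pd Ξm y i) x
          = -lap (fun y => Phi1 y - Phim1 y) x
      ∧ -lap (fun y => Phi1 y - Phim1 y) x = -(R x * (Phi1 x - Phim1 x))
      ∧ -(R x * (Phi1 x - Phim1 x))
          = -((Phi1 x - Phim1 x)^3 * ∑ i : Fin n, pd Ξp x i * pd Ξm x i) := by
  intro x hx
  have cm1 : ∀ y ∈ U, ContDiffAt ℝ (⊤ : ℕ∞) Phim1 y := fun y hy => hm1.contDiffAt (hU.mem_nhds hy)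
  have c0 : ∀ y ∈ U, ContDiffAt ℝ (⊤ : ℕ∞) Phi0 y := fun y hy => h0.contDiffAt (hU.mem_nhds hy)
  have c1 : ∀ y ∈ U, ContDiffAt ℝ (⊤ : ℕ∞) Phi1 y := fun y hy => h1.contDiffAt (hU.mem_nhds hy)
  have dm1 : ∀ y ∈ U, DifferentiableAt ℝ Phim1 y := fun y hy => (cm1 y hy).differentiableAt (by simp)
  have d0 : ∀ y ∈ U, DifferentiableAt ℝ Phi0 y := fun y hy => (c0 y hy).differentiableAt (by simp)
  have d1 : ∀ y ∈ U, DifferentiableAt ℝ Phi1 y := fun y hy => (c1 y hy).differentiableAt (by simp)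
  have hWne : ∀ y ∈ U, Phi1 y - Phim1 y ≠ 0 := fun y hy => ne_of_gt (hpos y hy)
  have dW : ∀ y ∈ U, DifferentiableAt ℝ (fun z => Phi1 z - Phim1 z) y :=
    fun y hy => (d1 y hy).sub (dm1 y hy)
  have pdW : ∀ y ∈ U, ∀ i : Fin n,
      pd (fun z => Phi1 z - Phim1 z) y i = pd Phi1 y i - pd Phim1 y i :=
    fun y hy i => pd_sub (d1 y hy) (dm1 y hy) i
  -- second partials of W
  have hlapW : lap (fun y => Phi1 y - Phim1 y) x = lap Phi1 x - lap Phim1 x := by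
    rw [lap_eq_sum_pd, lap_eq_sum_pd, lap_eq_sum_pd, ← Finset.sum_sub_distrib]
    refine Finset.sum_congr rfl fun i _ => ?_
    have hev : (fun y => pd (fun z => Phi1 z - Phim1 z) y i) =ᶠ[nhds x]
        (fun y => pd Phi1 y i - pd Phim1 y i) :=
      Filter.eventuallyEq_of_mem (hU.mem_nhds hx) (fun y hy => pdW y hy i)
    rw [pd_congr hev i,
      pd_sub ((contDiffAt_pd (c1 x hx) i).differentiableAt (by simp))
        ((contDiffAt_pd (cm1 x hx) i).differentiableAt (by simp)) i]
  -- differentiated constraint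
  have hkey : ∀ y ∈ U, ∀ i : Fin n,
      Phim1 y * pd Phim1 y i - Phi0 y * pd Phi0 y i - Phi1 y * pd Phi1 y i = 0 := by
    intro y hy i
    have hG : (fun z => Phim1 z ^ 2 - Phi0 z ^ 2 - Phi1 z ^ 2) =ᶠ[nhds y]
        (fun _ => (-1 : ℝ)) :=
      Filter.eventuallyEq_of_mem (hU.mem_nhds hy) hcon
    have h0' : pd (fun z => Phim1 z ^ 2 - Phi0 z ^ 2 - Phi1 z ^ 2) y i = 0 := by
      rw [pd_congr hG i]; simp [pd]
    rw [pd_sub (((dm1 y hy).fun_pow 2).fun_sub ((d0 y hy).fun_pow 2)) ((d1 y hy).fun_pow 2) i,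
      pd_sub ((dm1 y hy).fun_pow 2) ((d0 y hy).fun_pow 2) i,
      pd_sq (dm1 y hy) i, pd_sq (d0 y hy) i, pd_sq (d1 y hy) i] at h0'
    linarith
  -- main computation, for Xi = (1 + s·Φ₀)/W - 1
  have hmain : ∀ (Xi : (Fin n → ℝ) → ℝ) (s : ℝ),
      (∀ y, Xi y = (1 + s * Phi0 y) / (Phi1 y - Phim1 y) - 1) →
      (∀ y ∈ U, ∀ i : Fin n, (Phi1 y - Phim1 y)^2 * pd Xi y i
          = s * ((Phi1 y - Phim1 y) * pd Phi0 y i)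
            - (1 + s * Phi0 y) * (pd Phi1 y i - pd Phim1 y i))
      ∧ diver (fun y i => (Phi1 y - Phim1 y)^2 * pd Xi y i) x
          = -lap (fun y => Phi1 y - Phim1 y) x := by
    intro Xi s hXi
    have dXi : ∀ y ∈ U, DifferentiableAt ℝ Xi y := by
      intro y hy
      have hEq : Xi = fun z => (1 + s * Phi0 z) * (Phi1 z - Phim1 z)⁻¹ - 1 := by
        funext z; rw [hXi z, div_eq_mul_inv]
      rw [hEq]
      exact (((differentiableAt_const (1:ℝ)).add ((d0 y hy).const_mul s)).mul
        ((dW y hy).inv (hWne y hy))).sub_const 1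
    have hq : ∀ y ∈ U, (Xi y + 1) * (Phi1 y - Phim1 y) = 1 + s * Phi0 y := by
      intro y hy
      rw [hXi y]
      field_simp
      rw [sub_add_cancel, mul_div_assoc', mul_div_cancel_left₀ _ (hWne y hy)]
    have scaled : ∀ y ∈ U, ∀ i : Fin n, (Phi1 y - Phim1 y)^2 * pd Xi y i
        = s * ((Phi1 y - Phim1 y) * pd Phi0 y i)
          - (1 + s * Phi0 y) * (pd Phi1 y i - pd Phim1 y i) := by
      intro y hy i
      have key : pd (fun z => (Xi z + 1) * (Phi1 z - Phim1 z)) y i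
          = pd (fun z => 1 + s * Phi0 z) y i := by
        apply pd_congr
        exact Filter.eventuallyEq_of_mem (hU.mem_nhds hy) (fun z hz => hq z hz)
      rw [pd_mul ((dXi y hy).add_const 1) (dW y hy) i, pdW y hy i,
        pd_add_const, pd_const_add, pd_const_mul (d0 y hy)] at key
      -- key : (Xi y + 1) * (pd Phi1 y i - pd Phim1 y i)
      --        + (Phi1 y - Phim1 y) * pd Xi y i = s * pd Phi0 y i
      have hqy := hq y hy
      linear_combination (Phi1 y - Phim1 y) * key
        - (pd Phi1 y i - pd Phim1 y i) * hqy
    refine ⟨scaled, ?_⟩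
    have step : ∀ i : Fin n,
        pd (fun y => (Phi1 y - Phim1 y)^2 * pd Xi y i) x i
          = s * ((Phi1 x - Phim1 x) * pd (fun y => pd Phi0 y i) x i)
            - (1 + s * Phi0 x) * (pd (fun y => pd Phi1 y i) x i
              - pd (fun y => pd Phim1 y i) x i) := by
      intro i
      have hev : (fun y => (Phi1 y - Phim1 y)^2 * pd Xi y i) =ᶠ[nhds x]
          (fun y => s * ((Phi1 y - Phim1 y) * pd Phi0 y i)
            - (1 + s * Phi0 y) * (pd Phi1 y i - pd Phim1 y i)) :=
        Filter.eventuallyEq_of_mem (hU.mem_nhds hx) (fun y hy => scaled y hy i)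
      rw [pd_congr hev i]
      have dpd0 : DifferentiableAt ℝ (fun y => pd Phi0 y i) x :=
        (contDiffAt_pd (c0 x hx) i).differentiableAt (by simp)
      have dpd1 : DifferentiableAt ℝ (fun y => pd Phi1 y i) x :=
        (contDiffAt_pd (c1 x hx) i).differentiableAt (by simp)
      have dpdm1 : DifferentiableAt ℝ (fun y => pd Phim1 y i) x :=
        (contDiffAt_pd (cm1 x hx) i).differentiableAt (by simp)
      rw [pd_sub (((dW x hx).fun_mul dpd0).const_mul s)
          (((differentiableAt_const (1:ℝ)).fun_add ((d0 x hx).const_mul s)).fun_mul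
            (dpd1.fun_sub dpdm1)) i,
        pd_const_mul ((dW x hx).fun_mul dpd0) s i,
        pd_mul (dW x hx) dpd0 i, pdW x hx i,
        pd_mul ((differentiableAt_const (1:ℝ)).fun_add ((d0 x hx).const_mul s))
          (dpd1.fun_sub dpdm1) i,
        pd_sub dpd1 dpdm1 i, pd_const_add, pd_const_mul (d0 x hx)]
      ring
    calc diver (fun y i => (Phi1 y - Phim1 y)^2 * pd Xi y i) x
        = ∑ i : Fin n, (s * ((Phi1 x - Phim1 x) * pd (fun y => pd Phi0 y i) x i)
            - (1 + s * Phi0 x) * (pd (fun y => pd Phi1 y i) x i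
              - pd (fun y => pd Phim1 y i) x i)) := by
          rw [diver_eq_sum_pd]
          exact Finset.sum_congr rfl fun i _ => step i
      _ = s * ((Phi1 x - Phim1 x) * lap Phi0 x)
            - (1 + s * Phi0 x) * (lap Phi1 x - lap Phim1 x) := by
          rw [lap_eq_sum_pd (f := Phi0), lap_eq_sum_pd (f := Phi1),
            lap_eq_sum_pd (f := Phim1), Finset.sum_sub_distrib,
            ← Finset.mul_sum, ← Finset.mul_sum, ← Finset.mul_sum,
            Finset.sum_sub_distrib]
      _ = -lap (fun y => Phi1 y - Phim1 y) x := by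
          rw [hlapW, hf0 x hx, hf1 x hx, hfm1 x hx]
          ring
  have hXp' : ∀ y, Ξp y = (1 + (1:ℝ) * Phi0 y) / (Phi1 y - Phim1 y) - 1 := by
    intro y; rw [hXp y, one_mul]
  have hXm' : ∀ y, Ξm y = (1 + (-1:ℝ) * Phi0 y) / (Phi1 y - Phim1 y) - 1 := by
    intro y; rw [hXm y]; ring_nf
  obtain ⟨scp, divp⟩ := hmain Ξp 1 hXp'
  obtain ⟨scm, divm⟩ := hmain Ξm (-1) hXm'
  refine ⟨divp, divm, ?_, ?_⟩
  · rw [hlapW, hf1 x hx, hfm1 x hx]; ring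
  · rw [hR x hx]
    have hSum : ((∑ i : Fin n, ((pd Phim1 x i)^2 - (pd Phi0 x i)^2 - (pd Phi1 x i)^2))
          * (Phi1 x - Phim1 x)) * (Phi1 x - Phim1 x)
        = ((Phi1 x - Phim1 x)^3 * ∑ i : Fin n, pd Ξp x i * pd Ξm x i)
          * (Phi1 x - Phim1 x) := by
      rw [Finset.sum_mul, Finset.sum_mul, Finset.mul_sum, Finset.sum_mul]
      refine Finset.sum_congr rfl fun i _ => ?_
      have hsp := scp x hx i
      have hsm := scm x hx i
      have hk := hkey x hx i
      have hc := hcon x hx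
      linear_combination
        (-((Phi1 x - Phim1 x)^2 * pd Ξm x i)) * hsp
        + (-((Phi1 x - Phim1 x) * pd Phi0 x i
            - (1 + Phi0 x) * (pd Phi1 x i - pd Phim1 x i))) * hsm
        + (2 * (Phi1 x - Phim1 x) * (pd Phi1 x i - pd Phim1 x i)) * hk
        + (-((pd Phi1 x i - pd Phim1 x i)^2)) * hc
    have := mul_right_cancel₀ (hWne x hx) hSum
    rw [this]
end
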